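/- (Claim 4) Let k ≥ 1, n ≥ 2 be integers and let A ⊆ [k]^n be a compressed set. Then A is a down-set, and moreover d(A) is also a down-set. -/

import Mathlib

open Finset
open scoped Classical

/-- `R_i(x)`: the set of coordinates of `x` equal to `i`.
The ambient alphabet is `[k+1] = {0,…,k}`. -/
noncomputable def rset {k N : ℕ} (x : Fin N → Fin (k + 1)) (i : ℕ) : Finset (Fin N) :=
  Finset.univ.filter fun j => (x j : ℕ) = i

/-- the strict binary order on finite sets of coordinates:
`X <_bin Y` iff `X ≠ Y` and `max (X Δ Y) ∈ Y`. -/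
def binLT {N : ℕ} (X Y : Finset (Fin N)) : Prop :=
  ∃ m ∈ Y, m ∉ X ∧ ∀ j : Fin N, ((j ∈ X ∧ j ∉ Y) ∨ (j ∈ Y ∧ j ∉ X)) → j ≤ m

/-- the strict `≤`-order on `[k+1]^N`: `x < y` iff `|R_0(x)| > |R_0(y)|`, or
`|R_0(x)| = |R_0(y)|` and for the largest `i` with `R_i(x) ≠ R_i(y)` we have
`max (R_i(x) Δ R_i(y)) ∈ R_i(y)`. -/
def plt {k N : ℕ} (x y : Fin N → Fin (k + 1)) : Prop :=
  (rset y 0).card < (rset x 0).card ∨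
    ((rset x 0).card = (rset y 0).card ∧
      ∃ i : ℕ, binLT (rset x i) (rset y i) ∧ ∀ j : ℕ, i < j → rset x j = rset y j)

/-- the `≤`-order on `[k+1]^N`. -/
def ple {k N : ℕ} (x y : Fin N → Fin (k + 1)) : Prop := x = y ∨ plt x y

/-- `B` is an initial segment of the `≤`-order. -/
def isInitSeg {k N : ℕ} (B : Finset (Fin N → Fin (k + 1))) : Prop :=
  ∀ y ∈ B, ∀ x, ple x y → x ∈ B

/-- the `d`-shadow: all points obtained from a point of `A` by flipping one
nonzero coordinate to `0`. -/
noncomputable def dShadow {k N : ℕ} (A : Finset (Fin N → Fin (k + 1))) :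
    Finset (Fin N → Fin (k + 1)) :=
  A.biUnion fun x =>
    (Finset.univ.filter fun i => x i ≠ 0).image fun i => Function.update x i 0

/-- the initial segment of the `≤`-order on `[k+1]^N` of cardinality `m`. -/
noncomputable def initSeg (k N m : ℕ) : Finset (Fin N → Fin (k + 1)) :=
  Finset.univ.filter fun x => (Finset.univ.filter fun y => ple y x).card ≤ m

/-- the `C_s`-compression of `A ⊆ [k+1]^(n+1)`: replace each slice
`A_{s,t} = {y : t_s y ∈ A}` by the initial segment of the same size. -/
noncomputable def compress {k n : ℕ} (s : Fin (n + 1)) (A : Finset (Fin (n + 1) → Fin (k + 1))) :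
    Finset (Fin (n + 1) → Fin (k + 1)) :=
  Finset.univ.biUnion fun t : Fin (k + 1) =>
    (initSeg k n
        (Finset.univ.filter fun y : Fin n → Fin (k + 1) => s.insertNth t y ∈ A).card).image
      fun y => s.insertNth t y

/-- `A` is compressed if every `C_s`-compression fixes it. -/
def IsCompressed {k n : ℕ} (A : Finset (Fin (n + 1) → Fin (k + 1))) : Prop :=
  ∀ s : Fin (n + 1), compress s A = A

/-- `B_r`: points with exactly `r` zero coordinates. -/
noncomputable def Bexact (k N r : ℕ) : Finset (Fin N → Fin (k + 1)) :=
  Finset.univ.filter fun x => (rset x 0).card = r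

/-- `B_{≥r}`: points with at least `r` zero coordinates. -/
noncomputable def Bge (k N r : ℕ) : Finset (Fin N → Fin (k + 1)) :=
  Finset.univ.filter fun x => r ≤ (rset x 0).card

/-- `m(x)`: the largest coordinate value of `x`. -/
noncomputable def mval {k N : ℕ} (x : Fin N → Fin (k + 1)) : ℕ :=
  Finset.univ.sup fun i => (x i : ℕ)

/-- the class `C_X`: points with maximal coordinate `s`, attained exactly on `X`,
and exactly `r` zero coordinates. -/
noncomputable def classSet (k N s r : ℕ) (X : Finset (Fin N)) : Finset (Fin N → Fin (k + 1)) :=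
  Finset.univ.filter fun x => mval x = s ∧ rset x s = X ∧ (rset x 0).card = r

/-- `[m]^N = {0,…,m−1}^N`. -/
noncomputable def box (k N m : ℕ) : Finset (Fin N → Fin (k + 1)) :=
  Finset.univ.filter fun x => ∀ i, (x i : ℕ) < m

/-- `{1,…,s−1}^N`. -/
noncomputable def box1 (k N s : ℕ) : Finset (Fin N → Fin (k + 1)) :=
  Finset.univ.filter fun x => ∀ i, 1 ≤ (x i : ℕ) ∧ (x i : ℕ) ≤ s - 1

/-- `B` is a down-set. -/
def isDownSet {k N : ℕ} (B : Finset (Fin N → Fin (k + 1))) : Prop :=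
  ∀ y ∈ B, ∀ x : Fin N → Fin (k + 1), (∀ j, (x j : ℕ) ≤ (y j : ℕ)) → x ∈ B

/-!
The `≤`-order is the lexicographic order of the key (number of zeros reversed, then the classes
`R_k, R_{k-1}, …` in colex order), so it is transitive. Lowering one coordinate moves a point
strictly down: it either creates a new zero or removes that coordinate from the largest class
that changes. Hence initial segments are closed under lowering a coordinate. With at least two
coordinates, lowering coordinate `s` of a point of `A` happens inside its slice along another
coordinate `s'`, which is an initial segment because `A` is compressed; so `A` is closed under
lowering single coordinates, i.e. a down-set. For the shadow, lower the point of `A` from which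
the shadow point came instead.
-/

section

open Function

variable {k N : ℕ}

theorem isLowerSet_of_update_mem {ι : Type*} {α : ι → Type*} [Fintype ι] [DecidableEq ι]
    [∀ i, Preorder (α i)] {A : Set (∀ i, α i)}
    (hA : ∀ y ∈ A, ∀ i (v : α i), v ≤ y i → update y i v ∈ A) : IsLowerSet A := by
  intro y x hxy hy
  have hpiecewise : ∀ S : Finset ι, S.piecewise x y ∈ A := by
    intro S
    induction S using Finset.induction_on with
    | empty => simpa using hy
    | insert a S haS ih =>
      rw [Finset.piecewise_insert]
      exact hA _ ih a (x a) (by rw [Finset.piecewise_eq_of_notMem _ _ _ haS]; exact hxy a)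
  simpa using hpiecewise Finset.univ

theorem isDownSet_iff_isLowerSet {B : Finset (Fin N → Fin (k + 1))} :
    isDownSet B ↔ IsLowerSet (B : Set (Fin N → Fin (k + 1))) :=
  ⟨fun h _ _ hxy hy => h _ hy _ hxy, fun h _ hy _ hxy => h hxy hy⟩

theorem binLT_iff_toColex_lt {X Y : Finset (Fin N)} :
    binLT X Y ↔ toColex X < toColex Y := by
  rw [Finset.Colex.toColex_lt_toColex_iff_max'_mem]
  constructor
  · rintro ⟨m, hmY, hmX, hmax⟩
    have hXY : X ≠ Y := fun h => hmX (h ▸ hmY)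
    refine ⟨hXY, ?_⟩
    have hm : m ∈ symmDiff X Y := Finset.mem_symmDiff.2 (Or.inr ⟨hmY, hmX⟩)
    have hle := Finset.le_max' _ m hm
    have hge :=
      hmax _ (Finset.mem_symmDiff.1 (Finset.max'_mem _ (Finset.symmDiff_nonempty.2 hXY)))
    rwa [le_antisymm hge hle]
  · rintro ⟨hXY, hmax⟩
    have hmem := Finset.max'_mem _ (Finset.symmDiff_nonempty.2 hXY)
    refine ⟨_, hmax, fun hX => ?_, fun j hj => Finset.le_max' _ j (Finset.mem_symmDiff.2 hj)⟩
    simp only [Finset.mem_symmDiff] at hmem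
    tauto

/-- `<` on `Colex (ℕ → _)` compares two functions at the largest index where they differ. -/
noncomputable def pltKey (x : Fin N → Fin (k + 1)) :
    ℕᵒᵈ × Colex (ℕ → Colex (Finset (Fin N))) :=
  (OrderDual.toDual (rset x 0).card, toColex fun i => toColex (rset x i))

theorem plt_iff_lex_pltKey {x y : Fin N → Fin (k + 1)} :
    plt x y ↔ Prod.Lex (· < ·) (· < ·) (pltKey x) (pltKey y) := by
  simp only [plt, Prod.lex_iff, pltKey, binLT_iff_toColex_lt, OrderDual.toDual_lt_toDual,
    OrderDual.toDual_inj]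
  show _ ↔ _ ∨ _ ∧ Pi.Lex (· > ·) (· < ·) _ _
  simp only [Pi.Lex, gt_iff_lt, Pi.toColex_apply, toColex_inj]
  exact or_congr_right (and_congr_right fun _ => exists_congr fun _ => and_comm)

theorem plt_trans {x y z : Fin N → Fin (k + 1)} (hxy : plt x y) (hyz : plt y z) :
    plt x z := by
  rw [plt_iff_lex_pltKey] at *
  exact _root_.trans hxy hyz

theorem ple_trans {x y z : Fin N → Fin (k + 1)} (hxy : ple x y) (hyz : ple y z) :
    ple x z := by
  rcases hxy with rfl | hxy
  · exact hyz
  rcases hyz with rfl | hyz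
  · exact Or.inr hxy
  · exact Or.inr (plt_trans hxy hyz)

@[simp]
theorem mem_rset {x : Fin N → Fin (k + 1)} {i : ℕ} {j : Fin N} :
    j ∈ rset x i ↔ (x j : ℕ) = i := by
  simp [rset]

theorem rset_update (x : Fin N → Fin (k + 1)) (s : Fin N) (v : Fin (k + 1)) (i : ℕ) :
    rset (update x s v) i =
      if (v : ℕ) = i then insert s (rset x i) else (rset x i).erase s := by
  ext j
  by_cases hj : j = s
  · subst hj
    split_ifs <;> simp [*]
  · split_ifs <;> simp [hj]

theorem plt_update_of_lt {x : Fin N → Fin (k + 1)} {s : Fin N} {v : Fin (k + 1)}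
    (hv : v < x s) : plt (update x s v) x := by
  have hv' : (v : ℕ) < x s := hv
  have hs0 : s ∉ rset x 0 := by rw [mem_rset]; omega
  rcases Nat.eq_zero_or_pos (v : ℕ) with hv0 | hv0
  · left
    rw [rset_update, if_pos hv0, Finset.card_insert_of_notMem hs0]
    omega
  · right
    have h0 : rset (update x s v) 0 = rset x 0 := by
      rw [rset_update, if_neg (by omega), Finset.erase_eq_of_notMem hs0]
    refine ⟨by rw [h0], x s, ?_, fun j hj => ?_⟩
    · rw [rset_update, if_neg hv'.ne, binLT_iff_toColex_lt]
      exact Finset.Colex.toColex_lt_toColex_of_ssubset (Finset.erase_ssubset (mem_rset.2 rfl))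
    · rw [rset_update, if_neg (by omega), Finset.erase_eq_of_notMem (by rw [mem_rset]; omega)]

theorem ple_update_of_le {x : Fin N → Fin (k + 1)} {s : Fin N} {v : Fin (k + 1)}
    (hv : v ≤ x s) : ple (update x s v) x := by
  rcases hv.eq_or_lt with rfl | hlt
  · exact Or.inl (update_eq_self s x)
  · exact Or.inr (plt_update_of_lt hlt)

theorem update_mem_initSeg {m : ℕ} {x : Fin N → Fin (k + 1)} {s : Fin N} {v : Fin (k + 1)}
    (hx : x ∈ initSeg k N m) (hv : v ≤ x s) : update x s v ∈ initSeg k N m := by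
  simp only [initSeg, Finset.mem_filter, Finset.mem_univ, true_and] at hx ⊢
  refine le_trans (Finset.card_le_card fun y hy => ?_) hx
  simp only [Finset.mem_filter, Finset.mem_univ, true_and] at hy ⊢
  exact ple_trans hy (ple_update_of_le hv)

theorem mem_compress_iff {n : ℕ} {s : Fin (n + 1)} {A : Finset (Fin (n + 1) → Fin (k + 1))}
    {z : Fin (n + 1) → Fin (k + 1)} :
    z ∈ compress s A ↔ s.removeNth z ∈
      initSeg k n (Finset.univ.filter fun y : Fin n → Fin (k + 1) =>
        s.insertNth (z s) y ∈ A).card := by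
  simp only [compress, Finset.mem_biUnion, Finset.mem_univ, true_and, Finset.mem_image]
  constructor
  · rintro ⟨t, y, hy, rfl⟩
    simpa using hy
  · exact fun h => ⟨z s, s.removeNth z, h, Fin.insertNth_self_removeNth s z⟩

theorem IsCompressed.update_mem {n : ℕ} (hn : 1 ≤ n) {A : Finset (Fin (n + 1) → Fin (k + 1))}
    (hA : IsCompressed A) {y : Fin (n + 1) → Fin (k + 1)} (hy : y ∈ A) {s : Fin (n + 1)}
    {v : Fin (k + 1)} (hv : v ≤ y s) : update y s v ∈ A := by
  have : Nontrivial (Fin (n + 1)) := Fin.nontrivial_iff_two_le.2 (by omega)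
  obtain ⟨s', hs'⟩ := exists_ne s
  obtain ⟨j, rfl⟩ := Fin.exists_succAbove_eq hs'.symm
  rw [← hA s', mem_compress_iff, update_of_ne hs', Fin.removeNth_update_succAbove]
  exact update_mem_initSeg (mem_compress_iff.1 ((hA s').symm ▸ hy)) hv

theorem IsCompressed.isDownSet {n : ℕ} (hn : 1 ≤ n) {A : Finset (Fin (n + 1) → Fin (k + 1))}
    (hA : IsCompressed A) : isDownSet A :=
  isDownSet_iff_isLowerSet.2 <|
    isLowerSet_of_update_mem fun _ hy _ _ hv => hA.update_mem hn hy hv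

theorem mem_dShadow {A : Finset (Fin N → Fin (k + 1))} {x : Fin N → Fin (k + 1)} :
    x ∈ dShadow A ↔ ∃ y ∈ A, ∃ i, y i ≠ 0 ∧ update y i 0 = x := by
  simp [dShadow]

theorem isDownSet_dShadow {A : Finset (Fin N → Fin (k + 1))} (hA : isDownSet A) :
    isDownSet (dShadow A) := by
  rintro _ hx x' hx'
  obtain ⟨y, hyA, i, hyi, rfl⟩ := mem_dShadow.1 hx
  have hx'i : x' i = 0 := Fin.ext (Nat.le_zero.1 (by simpa using hx' i))
  refine mem_dShadow.2 ⟨update x' i (y i), hA y hyA _ fun j => ?_, i, by simpa, ?_⟩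
  · by_cases hj : j = i
    · subst hj
      simp
    · simpa [hj] using hx' j
  · rw [update_idem, ← hx'i, update_eq_self]

end

/-- **Claim 4.** Let `k ≥ 1`, `n ≥ 2` and let `A ⊆ [k]^n` be a compressed set.
Then `A` is a down-set and `d(A)` is also a down-set.
(Dimension `n ≥ 2` is rendered as `n + 1` with `n ≥ 1`.) -/
theorem claim4_downset (k n : ℕ) (hn : 1 ≤ n)
    (A : Finset (Fin (n + 1) → Fin (k + 1))) (hA : IsCompressed A) :
    isDownSet A ∧ isDownSet (dShadow A) := by
  have hdown := hA.isDownSet hn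
  exact ⟨hdown, isDownSet_dShadow hdown⟩
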